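/- Let T ≥ 1, let r : Fin T → ℝ and s : Fin T → ℝ be strictly positive, and let h be a nonzero complex number. Define, for σ > 0, L(σ) = ∑_t log I₀(2·(r t)·|h|/σ²) − ∑_t log I₀(2·(s t)·|h|/σ²), where I₀(x) = (1/π)·∫_0^π exp(x·cos z) dz. Then lim_{σ → 0⁺} (σ²/(2·|h|))·L(σ) = ∑_t r t − ∑_t s t. -/

import Mathlib

/-!
Write `I₀ x = (1/π) ∫₀^π exp (x cos z) dz`. Since `cos ≤ 1`, `I₀ x ≤ exp x`; and on `[0, 1/x]` the
bound `cos z ≥ 1 - z²/2` gives `x cos z ≥ x - 1/2`, so `I₀ x ≥ exp (x - 1/2) / (π x)`. Hence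
`log I₀ x = x + O(log x)` and `log I₀ x / x → 1` as `x → ∞`. With `x = 2 c |h| / σ²` each term
`(σ²/(2|h|)) log I₀ (2 c |h| / σ²)` tends to `c`, and the limit of `L` is the sum of these limits.
-/

open Real Filter Topology

noncomputable def besselI0 (x : ℝ) : ℝ := (1 / π) * ∫ z in (0 : ℝ)..π, exp (x * cos z)

lemma intervalIntegrable_exp_mul_cos (x a b : ℝ) :
    IntervalIntegrable (fun z => exp (x * cos z)) MeasureTheory.volume a b :=
  (continuous_exp.comp (continuous_const.mul continuous_cos)).intervalIntegrable a b

lemma besselI0_le_exp {x : ℝ} (hx : 0 ≤ x) : besselI0 x ≤ exp x := by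
  have hint : ∫ z in (0 : ℝ)..π, exp (x * cos z) ≤ ∫ _ in (0 : ℝ)..π, exp x :=
    intervalIntegral.integral_mono_on pi_pos.le (intervalIntegrable_exp_mul_cos x 0 π)
      intervalIntegrable_const fun z _ =>
        exp_le_exp.2 (mul_le_of_le_one_right hx (cos_le_one z))
  rw [intervalIntegral.integral_const, sub_zero, smul_eq_mul] at hint
  rw [besselI0, one_div, inv_mul_le_iff₀ pi_pos]
  exact hint

lemma exp_sub_half_div_le_besselI0 {x : ℝ} (hx : 1 ≤ x) :
    exp (x - 1 / 2) / (π * x) ≤ besselI0 x := by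
  have hx0 : 0 < x := one_pos.trans_le hx
  have hδ : 0 < x⁻¹ := inv_pos.2 hx0
  have hδπ : x⁻¹ ≤ π := (inv_le_one_of_one_le₀ hx).trans (one_le_two.trans two_le_pi)
  have hnear : ∀ z ∈ Set.Icc 0 x⁻¹, exp (x - 1 / 2) ≤ exp (x * cos z) := by
    rintro z ⟨hz0, hz⟩
    have hxz : x * z ^ 2 ≤ 1 :=
      calc x * z ^ 2 ≤ x * x⁻¹ ^ 2 := by gcongr
        _ = x⁻¹ := by field_simp
        _ ≤ 1 := inv_le_one_of_one_le₀ hx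
    have hcos : 1 - z ^ 2 / 2 ≤ cos z := one_sub_sq_div_two_le_cos
    exact exp_le_exp.2 (by nlinarith)
  have hint : x⁻¹ * exp (x - 1 / 2) ≤ ∫ z in (0 : ℝ)..π, exp (x * cos z) :=
    calc x⁻¹ * exp (x - 1 / 2) = ∫ _ in (0 : ℝ)..x⁻¹, exp (x - 1 / 2) := by simp
      _ ≤ ∫ z in (0 : ℝ)..x⁻¹, exp (x * cos z) :=
        intervalIntegral.integral_mono_on hδ.le intervalIntegrable_const
          (intervalIntegrable_exp_mul_cos x 0 _) hnear
      _ ≤ ∫ z in (0 : ℝ)..π, exp (x * cos z) :=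
        intervalIntegral.integral_mono_interval le_rfl hδ.le hδπ
          (Eventually.of_forall fun _ => (exp_pos _).le) (intervalIntegrable_exp_mul_cos x 0 π)
  rw [besselI0, div_le_iff₀ (by positivity)]
  calc exp (x - 1 / 2) = x * (x⁻¹ * exp (x - 1 / 2)) := by field_simp
    _ ≤ x * ∫ z in (0 : ℝ)..π, exp (x * cos z) := by gcongr
    _ = 1 / π * (∫ z in (0 : ℝ)..π, exp (x * cos z)) * (π * x) := by field_simp

lemma tendsto_log_besselI0_div_atTop :
    Tendsto (fun x => log (besselI0 x) / x) atTop (𝓝 1) := by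
  have hlower : Tendsto (fun x => 1 - (1 / 2 + log π) / x - log x / x) atTop (𝓝 1) := by
    simpa using (tendsto_const_nhds.sub (tendsto_const_nhds.div_atTop tendsto_id)).sub
      isLittleO_log_id_atTop.tendsto_div_nhds_zero
  refine tendsto_of_tendsto_of_tendsto_of_le_of_le' hlower tendsto_const_nhds ?_ ?_
  all_goals filter_upwards [eventually_ge_atTop 1] with x hx
  all_goals have hx0 : 0 < x := one_pos.trans_le hx
  · have hlog := log_le_log (by positivity) (exp_sub_half_div_le_besselI0 hx)
    rw [log_div (exp_pos _).ne' (by positivity), log_mul pi_ne_zero hx0.ne', log_exp] at hlog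
    rw [le_div_iff₀ hx0]
    calc (1 - (1 / 2 + log π) / x - log x / x) * x = x - 1 / 2 - (log π + log x) := by
          field_simp; ring
      _ ≤ log (besselI0 x) := hlog
  · have hpos : 0 < besselI0 x := (by positivity : (0 : ℝ) < exp (x - 1 / 2) / (π * x)).trans_le
      (exp_sub_half_div_le_besselI0 hx)
    rw [div_le_one hx0]
    exact (log_le_log hpos (besselI0_le_exp hx0.le)).trans_eq (log_exp x)

lemma tendsto_const_div_sq_nhdsGT_zero {a : ℝ} (ha : 0 < a) :
    Tendsto (fun σ : ℝ => a / σ ^ 2) (𝓝[>] 0) atTop := by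
  have hsq : Tendsto (fun σ : ℝ => σ ^ 2) (𝓝[>] 0) (𝓝[>] 0) :=
    tendsto_nhdsWithin_of_tendsto_nhds_of_eventually_within _
      ((continuous_pow 2).tendsto' 0 0 (zero_pow two_ne_zero) |>.mono_left nhdsWithin_le_nhds)
      (eventually_nhdsWithin_of_forall fun σ (hσ : 0 < σ) => pow_pos hσ 2)
  simpa only [div_eq_mul_inv, Function.comp_def] using (tendsto_inv_nhdsGT_zero.const_mul_atTop ha).comp hsq

lemma tendsto_sq_mul_log_besselI0 {c H : ℝ} (hc : 0 < c) (hH : 0 < H) :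
    Tendsto (fun σ : ℝ => (σ ^ 2 / (2 * H)) * log (besselI0 (2 * c * H / σ ^ 2)))
      (𝓝[>] 0) (𝓝 c) := by
  have hlim := (tendsto_log_besselI0_div_atTop.comp
    (tendsto_const_div_sq_nhdsGT_zero (by positivity : 0 < 2 * c * H))).const_mul c
  rw [mul_one] at hlim
  refine hlim.congr' (eventually_nhdsWithin_of_forall fun σ (hσ : 0 < σ) => ?_)
  simp only [Function.comp_apply]
  field_simp

theorem llr_high_snr_limit_general (T : ℕ) (r s : Fin T → ℝ)
    (hr : ∀ t, 0 < r t) (hs : ∀ t, 0 < s t) (h : ℂ) (hh : h ≠ 0) :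
    Tendsto (fun σ : ℝ =>
        (σ ^ 2 / (2 * ‖h‖)) *
          ((∑ t, Real.log ((1 / π) * ∫ z in (0 : ℝ)..π,
              Real.exp ((2 * r t * ‖h‖ / σ ^ 2) * Real.cos z)))
            - ∑ t, Real.log ((1 / π) * ∫ z in (0 : ℝ)..π,
              Real.exp ((2 * s t * ‖h‖ / σ ^ 2) * Real.cos z))))
      (nhdsWithin 0 (Set.Ioi 0)) (nhds ((∑ t, r t) - ∑ t, s t)) := by
  have hH : 0 < ‖h‖ := norm_pos_iff.mpr hh
  have hlim := (tendsto_finsetSum Finset.univ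
      fun t _ => tendsto_sq_mul_log_besselI0 (hr t) hH).sub
    (tendsto_finsetSum Finset.univ fun t _ => tendsto_sq_mul_log_besselI0 (hs t) hH)
  refine hlim.congr fun σ => ?_
  simp only [besselI0, mul_sub, Finset.mul_sum]

/-- High-SNR limit of the exact LLR (Proposition 1): as `σ → 0⁺`,
`(σ²/(2|h|)) · L σ → ∑ₜ rₜ − ∑ₜ sₜ`, where
`L σ = ∑ₜ log I₀(2 rₜ |h|/σ²) − ∑ₜ log I₀(2 sₜ |h|/σ²)` and
`I₀ x = (1/π) ∫_0^π exp (x cos z) dz`. -/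
theorem llr_high_snr_limit (T : ℕ) (hT : 1 ≤ T) (r s : Fin T → ℝ)
    (hr : ∀ t, 0 < r t) (hs : ∀ t, 0 < s t) (h : ℂ) (hh : h ≠ 0) :
    Tendsto (fun σ : ℝ =>
        (σ ^ 2 / (2 * ‖h‖)) *
          ((∑ t, Real.log ((1 / π) * ∫ z in (0 : ℝ)..π,
              Real.exp ((2 * r t * ‖h‖ / σ ^ 2) * Real.cos z)))
            - ∑ t, Real.log ((1 / π) * ∫ z in (0 : ℝ)..π,
              Real.exp ((2 * s t * ‖h‖ / σ ^ 2) * Real.cos z))))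
      (nhdsWithin 0 (Set.Ioi 0)) (nhds ((∑ t, r t) - ∑ t, s t)) :=
  llr_high_snr_limit_general T r s hr hs h hh
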